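/- Let G=(V,E) be a finite simple graph with a decomposition V = A ∪ B ∪ C satisfying properties (1)–(4) and with maximum degree Δ. Then (|A|+|B|)/2 ≥ (1/Δ)·(|E| − #E(A,C)). -/
import Mathlib


open Finset

variable {V : Type*} [Fintype V] [DecidableEq V]

/-- Number of neighbors of `v` lying in `S`. -/
def degIn (G : SimpleGraph V) [DecidableRel G.Adj] (v : V) (S : Finset V) : ℕ :=
  (S.filter (G.Adj v)).card

/-- Number of edges with one endpoint in `X` and the other in `Y`
(each edge counted once; for `X = Y` this is the number of edges inside `X`). -/
def eBtw (G : SimpleGraph V) [DecidableRel G.Adj] (X Y : Finset V) : ℕ :=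
  (G.edgeFinset.filter (fun e => ∃ x ∈ X, ∃ y ∈ Y, e = s(x, y))).card

lemma degIn_union (G : SimpleGraph V) [DecidableRel G.Adj] (v : V) {S T : Finset V}
    (h : Disjoint S T) : degIn G v (S ∪ T) = degIn G v S + degIn G v T := by
  unfold degIn
  rw [filter_union, card_union_of_disjoint (disjoint_filter_filter h)]

lemma eBtw_eq_sum (G : SimpleGraph V) [DecidableRel G.Adj] {A C : Finset V}
    (hAC : Disjoint A C) : eBtw G A C = ∑ c ∈ C, degIn G c A := by
  have h1 : eBtw G A C = ((C ×ˢ A).filter fun p => G.Adj p.1 p.2).card := by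
    unfold eBtw
    apply (Finset.card_bij (fun p _ => s(p.1, p.2)) ?_ ?_ ?_).symm
    · intro p hp
      simp only [mem_filter, mem_product] at hp
      simp only [mem_filter, SimpleGraph.mem_edgeFinset, SimpleGraph.mem_edgeSet]
      exact ⟨hp.2, p.2, hp.1.2, p.1, hp.1.1, Sym2.eq_swap.symm⟩
    · intro p hp q hq h
      simp only [mem_filter, mem_product] at hp hq
      rw [Sym2.eq_iff] at h
      rcases h with ⟨ha, hb⟩ | ⟨ha, hb⟩
      · exact Prod.ext ha hb
      · exact absurd hq.1.2 (Finset.disjoint_right.mp hAC (ha ▸ hp.1.1))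
    · intro e he
      simp only [mem_filter, SimpleGraph.mem_edgeFinset, SimpleGraph.mem_edgeSet] at he
      obtain ⟨he1, x, hx, y, hy, rfl⟩ := he
      refine ⟨(y, x), ?_, Sym2.eq_swap.symm⟩
      simp only [mem_filter, mem_product]
      exact ⟨⟨hy, hx⟩, he1.symm⟩
  rw [h1, Finset.card_filter, Finset.sum_product]
  unfold degIn
  exact Finset.sum_congr rfl fun c _ => (Finset.card_filter _ _).symm

theorem size_lower_bound (G : SimpleGraph V) [DecidableRel G.Adj]
    (A B C : Finset V)
    (hU : A ∪ B ∪ C = Finset.univ)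
    (hAB : Disjoint A B) (hAC : Disjoint A C) (hBC : Disjoint B C)
    (h1 : ∀ a ∈ A, degIn G a A + max 1 (degIn G a C) ≤ degIn G a B)
    (h2 : ∀ b ∈ B, degIn G b B + max 1 (degIn G b C) ≤ degIn G b A)
    (h3 : ∀ c ∈ C, ∀ c' ∈ C, ¬ G.Adj c c')
    (h4 : ∀ c ∈ C, degIn G c A = degIn G c B) :
    (1 / (G.maxDegree : ℚ)) * ((G.edgeFinset.card : ℚ) - eBtw G A C) ≤
      ((A.card : ℚ) + B.card) / 2 := by
  have hABC : Disjoint (A ∪ B) C := Finset.disjoint_union_left.mpr ⟨hAC, hBC⟩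
  -- degree decomposition
  have hdeg : ∀ v, G.degree v = degIn G v A + degIn G v B + degIn G v C := by
    intro v
    have : G.degree v = degIn G v (A ∪ B ∪ C) := by
      rw [hU]
      rw [← SimpleGraph.card_neighborFinset_eq_degree,
        SimpleGraph.neighborFinset_eq_filter]
      rfl
    rw [this, degIn_union G v hABC, degIn_union G v hAB]
  -- degrees inside C vanish
  have hCC : ∀ c ∈ C, degIn G c C = 0 := by
    intro c hc
    unfold degIn
    rw [Finset.card_eq_zero, Finset.filter_eq_empty_iff]
    intro c' hc'
    exact h3 c hc c' hc'
  -- degrees of C vertices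
  have hCdeg : ∑ c ∈ C, G.degree c = 2 * eBtw G A C := by
    rw [eBtw_eq_sum G hAC, Finset.mul_sum]
    apply Finset.sum_congr rfl
    intro c hc
    rw [hdeg c, hCC c hc, ← h4 c hc]
    ring
  -- sum over all vertices
  have hsum : ∑ v, G.degree v = 2 * G.edgeFinset.card :=
    SimpleGraph.sum_degrees_eq_twice_card_edges G
  have hsplit : ∑ v ∈ A ∪ B, G.degree v + ∑ c ∈ C, G.degree c = 2 * G.edgeFinset.card := by
    rw [← Finset.sum_union hABC, hU, hsum]
  have hbound : ∑ v ∈ A ∪ B, G.degree v ≤ (A.card + B.card) * G.maxDegree := by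
    calc ∑ v ∈ A ∪ B, G.degree v ≤ ∑ _v ∈ A ∪ B, G.maxDegree :=
          Finset.sum_le_sum fun v _ => G.degree_le_maxDegree v
      _ = (A ∪ B).card * G.maxDegree := by rw [Finset.sum_const, smul_eq_mul]
      _ = (A.card + B.card) * G.maxDegree := by rw [Finset.card_union_of_disjoint hAB]
  have hkey : 2 * G.edgeFinset.card ≤ (A.card + B.card) * G.maxDegree + 2 * eBtw G A C := by
    omega
  -- pass to ℚ
  rcases Nat.eq_zero_or_pos G.maxDegree with h0 | hpos
  · rw [h0]
    simp only [Nat.cast_zero, div_zero, zero_mul]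
    positivity
  · have hΔ : (0 : ℚ) < (G.maxDegree : ℚ) := by exact_mod_cast hpos
    rw [one_div, inv_mul_eq_div, div_le_iff₀ hΔ]
    have hkeyQ : 2 * (G.edgeFinset.card : ℚ) ≤
        ((A.card : ℚ) + B.card) * G.maxDegree + 2 * eBtw G A C := by
      exact_mod_cast hkey
    linarith
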